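/- arXiv:2501.06339 — 2 statements merged into one kernel-verified Lean document; each statement's English description precedes it below -/
import Mathlib

section
/- Hedge (exponential weights) regret bound: Let K = |A|, let f_1,…,f_T: X × A → [0,1] be an arbitrary sequence of functions, define π_1(·|x) uniform on A for every x, and π_{t+1}(a|x) ∝ π_t(a|x)·exp(η f_t(x,a)). If η = √(log K/(4(e−2)T)) and T ≥ log K/(e−2), then for every x ∈ X and every policy π: Σ_{t=1}^T (f_t(x,π) − f_t(x,π_t)) ≤ 4√(T log K), where f(x,π) := E_{a∼π(·|x)} f(x,a). Consequently, for any probability measure P̂ over X, Σ_{t=1}^T P̂(f_t(·,π) − f_t(·,π_t)) ≤ 4√(T log K). -/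
/-!
By induction the Hedge iterates are the Gibbs weights `π_t(a) = exp (η S_t(a)) / Z_t` of the
cumulative gains `S_t`, so it suffices to track the potential `log Z_t`. Since
`exp x ≤ 1 + x + x²` for `|x| ≤ 1`, each round raises it by at most `η f_t(π_t) + η²`, so
`log Z_T ≤ log K + η Σ_t f_t(π_t) + η² T`; on the other hand `log Z_T ≥ η S_T(a)` for every
action, hence `log Z_T ≥ η Σ_t f_t(π)` for every policy. Therefore
`η · regret ≤ log K + η² T`, and the choice of `η` makes the right-hand side at most
`η · 4 √(T log K)`. The bound for `P̂` is the pointwise bound averaged over contexts.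
-/

noncomputable def pmfExp {α : Type*} (p : PMF α) (f : α → ℝ) : ℝ :=
  ∑' a, (p a).toReal * f a

def IsPolicy {X A : Type*} [Fintype A] (π : X → A → ℝ) : Prop :=
  ∀ x, (∀ a, 0 ≤ π x a) ∧ (∑ a, π x a) = 1

section

open Finset Real

section Simplex

variable {A : Type*} [Fintype A]

theorem sum_mul_mem_Icc_of_mem_stdSimplex {p y : A → ℝ} (hp : p ∈ stdSimplex ℝ A)
    (hy : ∀ a, y a ∈ Set.Icc (0 : ℝ) 1) : ∑ a, p a * y a ∈ Set.Icc (0 : ℝ) 1 :=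
  ⟨sum_nonneg fun a _ => mul_nonneg (hp.1 a) (hy a).1,
    (sum_le_sum fun a _ => mul_le_of_le_one_right (hp.1 a) (hy a).2).trans hp.2.le⟩

theorem eq_of_mem_stdSimplex_of_subsingleton [Nonempty A] [Subsingleton A] {p q : A → ℝ}
    (hp : p ∈ stdSimplex ℝ A) (hq : q ∈ stdSimplex ℝ A) : p = q := by
  rw [stdSimplex_unique, Set.mem_singleton_iff] at hp hq
  rw [hp, hq]

theorem log_sum_mul_exp_le {p y : A → ℝ} (hp : p ∈ stdSimplex ℝ A) (hy : ∀ a, |y a| ≤ 1)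
    {η : ℝ} (hη : |η| ≤ 1) :
    log (∑ a, p a * exp (η * y a)) ≤ η * ∑ a, p a * y a + η ^ 2 := by
  have hterm : ∀ a, p a * exp (η * y a) ≤ p a * (1 + η * y a + η ^ 2) := by
    intro a
    have hx : |η * y a| ≤ 1 := by
      rw [abs_mul]; exact mul_le_one₀ hη (abs_nonneg _) (hy a)
    have hexp := (abs_le.1 (abs_exp_sub_one_sub_id_le hx)).2
    have hsq : (η * y a) ^ 2 ≤ η ^ 2 := by
      rw [mul_pow, ← sq_abs (y a)]
      exact mul_le_of_le_one_right (sq_nonneg η) (pow_le_one₀ (abs_nonneg _) (hy a))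
    exact mul_le_mul_of_nonneg_left (by linarith) (hp.1 a)
  have hsum : ∑ a, p a * exp (η * y a) ≤ 1 + η * ∑ a, p a * y a + η ^ 2 := calc
    _ ≤ ∑ a, p a * (1 + η * y a + η ^ 2) := sum_le_sum fun a _ => hterm a
    _ = (∑ a, p a) + η * ∑ a, p a * y a + η ^ 2 * ∑ a, p a := by
      rw [mul_sum, mul_sum, ← sum_add_distrib, ← sum_add_distrib]
      exact sum_congr rfl fun a _ => by ring
    _ = _ := by rw [hp.2]; ring
  have hpos : 0 < ∑ a, p a * exp (η * y a) := by
    obtain ⟨a, ha⟩ : ∃ a, 0 < p a := by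
      by_contra! h
      linarith [sum_nonpos fun a (_ : a ∈ univ) => h a, hp.2]
    exact sum_pos' (fun b _ => mul_nonneg (hp.1 b) (exp_pos _).le)
      ⟨a, mem_univ a, mul_pos ha (exp_pos _)⟩
  linarith [log_le_sub_one_of_pos hpos]

end Simplex

theorem sqrt_div_four_mul_le_one {L T c : ℝ} (hc : 1 / 4 ≤ c) (hT0 : 0 ≤ T) (hT : L / c ≤ T) :
    √(L / (4 * c * T)) ≤ 1 := by
  have hLc : L ≤ c * T := (div_le_iff₀' (by linarith)).1 hT
  rw [sqrt_le_one]
  exact div_le_one_of_le₀ (by nlinarith) (by positivity)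

theorem add_sq_mul_le_mul_four_sqrt {L T c η : ℝ} (hL : 0 ≤ L) (hT : 0 < T) (hc : 1 / 4 ≤ c)
    (hc1 : c ≤ 1) (hη : η = √(L / (4 * c * T))) :
    L + η ^ 2 * T ≤ η * (4 * √(T * L)) := by
  have hc0 : 0 < c := by linarith
  have hηT : η ^ 2 * T = L / (4 * c) := by
    rw [hη, sq_sqrt (by positivity)]
    field_simp
  have hηT_le : L / (4 * c) ≤ L := div_le_self hL (by linarith)
  have hhalf : L / 2 ≤ η * √(T * L) := by
    rw [hη, ← sqrt_mul (by positivity), ← sqrt_sq (by positivity : 0 ≤ L / 2)]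
    apply sqrt_le_sqrt
    rw [show L / (4 * c * T) * (T * L) = L ^ 2 / (4 * c) by field_simp, div_pow]
    exact div_le_div_of_nonneg_left (sq_nonneg L) (by positivity) (by linarith)
  linarith

namespace Hedge

variable {A : Type*} (η : ℝ) (g : ℕ → A → ℝ)

def cumGain (t : ℕ) (a : A) : ℝ := ∑ s ∈ range t, g s a

theorem exp_mul_cumGain_succ (t : ℕ) (a : A) :
    exp (η * cumGain g (t + 1) a) = exp (η * cumGain g t a) * exp (η * g t a) := by
  rw [cumGain, sum_range_succ, mul_add, exp_add, cumGain]

variable [Fintype A]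

noncomputable def partitionFn (t : ℕ) : ℝ := ∑ a, exp (η * cumGain g t a)

noncomputable def weights (t : ℕ) (a : A) : ℝ := exp (η * cumGain g t a) / partitionFn η g t

theorem partitionFn_zero : partitionFn η g 0 = Fintype.card A := by
  simp [partitionFn, cumGain]

variable [Nonempty A]

theorem partitionFn_pos (t : ℕ) : 0 < partitionFn η g t :=
  sum_pos (fun _ _ => exp_pos _) univ_nonempty

theorem weights_mem_stdSimplex (t : ℕ) : weights η g t ∈ stdSimplex ℝ A :=
  ⟨fun _ => div_nonneg (exp_pos _).le (partitionFn_pos η g t).le, by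
    simp only [weights, ← sum_div]
    exact div_self (partitionFn_pos η g t).ne'⟩

theorem partitionFn_succ (t : ℕ) :
    partitionFn η g (t + 1) = partitionFn η g t * ∑ a, weights η g t a * exp (η * g t a) := by
  rw [partitionFn, mul_sum]
  refine sum_congr rfl fun a _ => ?_
  rw [weights, exp_mul_cumGain_succ]
  field_simp [(partitionFn_pos η g t).ne']

theorem weights_succ (t : ℕ) (a : A) :
    weights η g (t + 1) a =
      weights η g t a * exp (η * g t a) / ∑ b, weights η g t b * exp (η * g t b) := by
  rw [weights, partitionFn_succ, exp_mul_cumGain_succ, weights]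
  ring

theorem eq_weights_of_update {p : ℕ → A → ℝ} (h0 : ∀ a, p 0 a = 1 / Fintype.card A)
    (hsucc : ∀ t a, p (t + 1) a = p t a * exp (η * g t a) / ∑ b, p t b * exp (η * g t b))
    (t : ℕ) : p t = weights η g t := by
  induction t with
  | zero => funext a; simp [h0, weights, partitionFn_zero, cumGain]
  | succ t ih => funext a; rw [hsucc, ih, weights_succ]

theorem mul_sum_le_log_partitionFn {q : A → ℝ} (hq : q ∈ stdSimplex ℝ A) (T : ℕ) :
    η * ∑ t ∈ range T, ∑ a, q a * g t a ≤ log (partitionFn η g T) := by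
  have hle : ∀ a, η * cumGain g T a ≤ log (partitionFn η g T) := fun a =>
    (le_log_iff_exp_le (partitionFn_pos η g T)).2 <|
      single_le_sum (f := fun b => exp (η * cumGain g T b)) (fun _ _ => (exp_pos _).le)
        (mem_univ a)
  calc η * ∑ t ∈ range T, ∑ a, q a * g t a = ∑ a, q a * (η * cumGain g T a) := by
        simp only [cumGain, mul_sum]
        rw [sum_comm]
        exact sum_congr rfl fun a _ => sum_congr rfl fun t _ => by ring
    _ ≤ ∑ a, q a * log (partitionFn η g T) :=
        sum_le_sum fun a _ => mul_le_mul_of_nonneg_left (hle a) (hq.1 a)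
    _ = log (partitionFn η g T) := by rw [← sum_mul, hq.2, one_mul]

variable {g}

theorem log_partitionFn_succ_le (hg : ∀ t a, |g t a| ≤ 1) (hη : |η| ≤ 1) (t : ℕ) :
    log (partitionFn η g (t + 1)) ≤
      log (partitionFn η g t) + (η * ∑ a, weights η g t a * g t a + η ^ 2) := by
  have hM : ∑ a, weights η g t a * exp (η * g t a) ≠ 0 :=
    right_ne_zero_of_mul (by rw [← partitionFn_succ]; exact (partitionFn_pos η g _).ne')
  rw [partitionFn_succ, log_mul (partitionFn_pos η g t).ne' hM]
  linarith [log_sum_mul_exp_le (weights_mem_stdSimplex η g t) (hg t) hη]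

theorem log_partitionFn_le (hg : ∀ t a, |g t a| ≤ 1) (hη : |η| ≤ 1) (T : ℕ) :
    log (partitionFn η g T) ≤
      log (Fintype.card A) + η * ∑ t ∈ range T, ∑ a, weights η g t a * g t a + η ^ 2 * T := by
  have h := sum_le_sum fun t (_ : t ∈ range T) =>
    sub_le_iff_le_add'.2 (log_partitionFn_succ_le η hg hη t)
  rw [sum_range_sub (fun t => log (partitionFn η g t)), partitionFn_zero, sum_add_distrib,
    ← mul_sum, sum_const, card_range, nsmul_eq_mul] at h
  linarith

theorem mul_regret_le {q : A → ℝ} (hq : q ∈ stdSimplex ℝ A) (hg : ∀ t a, |g t a| ≤ 1)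
    (hη : |η| ≤ 1) (T : ℕ) :
    η * ∑ t ∈ range T, (∑ a, q a * g t a - ∑ a, weights η g t a * g t a) ≤
      log (Fintype.card A) + η ^ 2 * T := by
  rw [sum_sub_distrib, mul_sub]
  linarith [mul_sum_le_log_partitionFn η g hq T, log_partitionFn_le η hg hη T]

theorem regret_le {q : A → ℝ} (hq : q ∈ stdSimplex ℝ A) (hg : ∀ t a, |g t a| ≤ 1) {T : ℕ}
    (hη : η = √(log (Fintype.card A) / (4 * (exp 1 - 2) * T)))
    (hT : log (Fintype.card A) / (exp 1 - 2) ≤ T) :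
    ∑ t ∈ range T, (∑ a, q a * g t a - ∑ a, weights η g t a * g t a) ≤
      4 * √(T * log (Fintype.card A)) := by
  rcases le_or_gt (Fintype.card A) 1 with hcard | hcard
  · have : Subsingleton A := Fintype.card_le_one_iff_subsingleton.1 hcard
    have hw : ∀ t, weights η g t = q := fun t =>
      eq_of_mem_stdSimplex_of_subsingleton (weights_mem_stdSimplex η g t) hq
    simp only [hw, sub_self, sum_const_zero]
    positivity
  rcases Nat.eq_zero_or_pos T with rfl | hT0
  · simp
  have hc : 1 / 4 ≤ exp 1 - 2 := by linarith [exp_one_gt_d9]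
  have hc1 : exp 1 - 2 ≤ 1 := by linarith [exp_one_lt_d9]
  have hL : 0 < log (Fintype.card A) := log_pos (by exact_mod_cast hcard)
  have hTpos : (0 : ℝ) < T := by exact_mod_cast hT0
  have hη0 : 0 < η := by rw [hη]; positivity
  have hη1 : |η| ≤ 1 := by
    rw [abs_of_pos hη0, hη]; exact sqrt_div_four_mul_le_one hc hTpos.le hT
  refine le_of_mul_le_mul_left ?_ hη0
  calc _ ≤ log (Fintype.card A) + η ^ 2 * T := mul_regret_le η hq hg hη1 T
    _ ≤ _ := add_sq_mul_le_mul_four_sqrt hL.le hTpos hc hc1 hη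

end Hedge

theorem sum_pmfExp_le {X ι : Type*} (P : PMF X) (s : Finset ι) {h : ι → X → ℝ} {C b : ℝ}
    (hC : ∀ i x, |h i x| ≤ C) (hb : ∀ x, ∑ i ∈ s, h i x ≤ b) :
    ∑ i ∈ s, pmfExp P (h i) ≤ b := by
  have hP : Summable fun x => (P x).toReal :=
    ENNReal.summable_toReal (by rw [P.tsum_coe]; exact ENNReal.one_ne_top)
  have hP1 : ∑' x, (P x).toReal = 1 := by
    rw [← ENNReal.tsum_toReal_eq P.apply_ne_top, P.tsum_coe, ENNReal.toReal_one]
  have hsummable : ∀ i, Summable fun x => (P x).toReal * h i x := fun i =>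
    (hP.mul_right C).of_norm_bounded fun x => by
      rw [norm_mul, Real.norm_of_nonneg ENNReal.toReal_nonneg, Real.norm_eq_abs]
      exact mul_le_mul_of_nonneg_left (hC i x) ENNReal.toReal_nonneg
  calc ∑ i ∈ s, pmfExp P (h i) = ∑' x, (P x).toReal * ∑ i ∈ s, h i x := by
        simp only [pmfExp, mul_sum]
        exact (Summable.tsum_finsetSum fun i _ => hsummable i).symm
    _ ≤ ∑' x, (P x).toReal * b :=
        Summable.tsum_le_tsum (fun x => mul_le_mul_of_nonneg_left (hb x) ENNReal.toReal_nonneg)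
          (by simp only [mul_sum]; exact summable_sum fun i _ => hsummable i) (hP.mul_right b)
    _ = b := by rw [tsum_mul_right, hP1, one_mul]

end

/-- Hedge (exponential weights) regret bound: if `π_1` is uniform,
`π_{t+1}(a|x) ∝ π_t(a|x) exp(η f_t(x,a))`, `η = √(log K / (4(e-2)T))` and
`T ≥ log K / (e-2)`, then for every context `x` and every policy `π`,
`Σ_{t<T} (f_t(x,π) - f_t(x,π_t)) ≤ 4 √(T log K)`; consequently the same bound
holds after averaging contexts with respect to any probability measure. -/
theorem hedge_regret {X A : Type*} [Fintype A] (K : ℕ) (hK : K = Fintype.card A)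
    (hK1 : 1 ≤ K) (T : ℕ) (η : ℝ)
    (hη : η = Real.sqrt (Real.log K / (4 * (Real.exp 1 - 2) * T)))
    (hT : (T : ℝ) ≥ Real.log K / (Real.exp 1 - 2))
    (f : ℕ → X → A → ℝ) (hf : ∀ t x a, f t x a ∈ Set.Icc (0 : ℝ) 1)
    (πs : ℕ → X → A → ℝ)
    (hπ0 : ∀ x a, πs 0 x a = 1 / K)
    (hπs : ∀ t x a, πs (t + 1) x a =
      πs t x a * Real.exp (η * f t x a) / ∑ a', πs t x a' * Real.exp (η * f t x a')) :
    (∀ x : X, ∀ π : X → A → ℝ, IsPolicy π →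
      ∑ t ∈ Finset.range T, ((∑ a, π x a * f t x a) - ∑ a, πs t x a * f t x a) ≤
        4 * Real.sqrt (T * Real.log K)) ∧
    (∀ P : PMF X, ∀ π : X → A → ℝ, IsPolicy π →
      ∑ t ∈ Finset.range T,
          pmfExp P (fun x => (∑ a, π x a * f t x a) - ∑ a, πs t x a * f t x a) ≤
        4 * Real.sqrt (T * Real.log K)) := by
  subst hK
  have : Nonempty A := Fintype.card_pos_iff.1 hK1
  have hweights : ∀ x t, πs t x = Hedge.weights η (fun t a => f t x a) t := fun x =>
    Hedge.eq_weights_of_update η _ (hπ0 x) (fun t => hπs t x)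
  have hregret : ∀ x (π : X → A → ℝ), IsPolicy π →
      ∑ t ∈ Finset.range T, ((∑ a, π x a * f t x a) - ∑ a, πs t x a * f t x a) ≤
        4 * √(T * Real.log (Fintype.card A)) := fun x π hπ => by
    simp only [hweights x]
    exact Hedge.regret_le η (hπ x) (fun t a => abs_le.2 ⟨by linarith [(hf t x a).1], (hf t x a).2⟩)
      hη hT
  refine ⟨hregret, fun P π hπ => sum_pmfExp_le P _ (C := 1) (fun t x => ?_) (hregret · π hπ)⟩
  have hπs_mem : πs t x ∈ stdSimplex ℝ A := hweights x t ▸ Hedge.weights_mem_stdSimplex η _ t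
  obtain ⟨h0, h1⟩ := sum_mul_mem_Icc_of_mem_stdSimplex (hπ x) (hf t x)
  obtain ⟨h0', h1'⟩ := sum_mul_mem_Icc_of_mem_stdSimplex hπs_mem (hf t x)
  exact abs_sub_le_of_nonneg_of_le h0 h1 h0' h1'
end

section
/- Fixed point of induced MDPs: Let M be an episodic MDP with horizon H, let π be any policy, and let Q = {Q_h}_{h∈[H]} be any sequence of functions Q_h: X × A → ℝ (with Q_{H+1} ≡ 0). Let M(Q,π) be the MDP identical to M except its mean reward at step h is r_h^{π,Q}(x,a) := r_h(x,a) − ([T_h^π Q_{h+1}](x,a) − Q_h(x,a)). Then the action-value functions of π in M(Q,π) equal Q, i.e., Q_{h,M(Q,π)}^π = Q_h for all h ∈ [H]. -/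
/-- `π : ℕ → X → A → ℝ` is a (nonstationary, stochastic) policy. -/
def IsPolicySeq {X A : Type*} [Fintype A] (π : ℕ → X → A → ℝ) : Prop :=
  ∀ h x, (∀ a, 0 ≤ π h x a) ∧ (∑ a, π h x a) = 1

/-- `k`-step-to-go state value function of `π` at step `h` in the episodic MDP
with transitions `P` and mean rewards `r`. -/
noncomputable def Vsteps {X A : Type*} [Fintype A] (P : ℕ → X → A → PMF X)
    (r : ℕ → X → A → ℝ) (π : ℕ → X → A → ℝ) : ℕ → ℕ → X → ℝ
  | 0, _, _ => 0
  | k + 1, h, x =>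
      ∑ a, π h x a * (r h x a + pmfExp (P h x a) (Vsteps P r π k (h + 1)))

/-- Action-value function `Q_h^π` in the horizon-`H` episodic MDP `(P, r)`. -/
noncomputable def Qh {X A : Type*} [Fintype A] (H : ℕ) (P : ℕ → X → A → PMF X)
    (r : ℕ → X → A → ℝ) (π : ℕ → X → A → ℝ) (h : ℕ) (x : X) (a : A) : ℝ :=
  r h x a + pmfExp (P h x a) fun x' => Vsteps P r π (H - (h + 1)) (h + 1) x'

/-- The Bellman operator `[T_h^π f](x,a) = r_h(x,a) + E_{x'∼P_h(·|x,a)}[f(x', π_{h+1})]`. -/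
noncomputable def bellmanOp {X A : Type*} [Fintype A] (P : ℕ → X → A → PMF X)
    (r : ℕ → X → A → ℝ) (π : ℕ → X → A → ℝ) (h : ℕ) (f : X → A → ℝ)
    (x : X) (a : A) : ℝ :=
  r h x a + pmfExp (P h x a) fun x' => ∑ a', π (h + 1) x' a' * f x' a'

section BellmanFixedPoint

variable {X A : Type*} [Fintype A] {H : ℕ} {P : ℕ → X → A → PMF X} {r : ℕ → X → A → ℝ}
  {π : ℕ → X → A → ℝ} {Q : ℕ → X → A → ℝ}

/-- The mean reward `r^{π,Q}` of the induced MDP `M(Q, π)`. -/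
noncomputable def inducedReward (P : ℕ → X → A → PMF X) (r : ℕ → X → A → ℝ)
    (π : ℕ → X → A → ℝ) (Q : ℕ → X → A → ℝ) (h : ℕ) (x : X) (a : A) : ℝ :=
  r h x a - (bellmanOp P r π h (Q (h + 1)) x a - Q h x a)

theorem bellmanOp_inducedReward (P : ℕ → X → A → PMF X) (r : ℕ → X → A → ℝ)
    (π : ℕ → X → A → ℝ) (Q : ℕ → X → A → ℝ) (h : ℕ) (x : X) (a : A) :
    bellmanOp P (inducedReward P r π Q) π h (Q (h + 1)) x a = Q h x a := by
  simp only [bellmanOp, inducedReward]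
  ring

theorem Vsteps_eq_of_bellmanOp_eq
    (hQ : ∀ h < H, ∀ x a, bellmanOp P r π h (Q (h + 1)) x a = Q h x a)
    (hQH : ∀ x a, Q H x a = 0) :
    ∀ k h, h + k = H → Vsteps P r π k h = fun x => ∑ a, π h x a * Q h x a := by
  intro k
  induction k with
  | zero =>
    intro h hH
    obtain rfl : h = H := hH
    funext x
    simp [Vsteps, hQH]
  | succ k ih =>
    intro h hk
    funext x
    rw [Vsteps, ih (h + 1) (by omega)]
    exact Finset.sum_congr rfl fun a _ => congrArg _ (hQ h (by omega) x a)

theorem Qh_eq_of_bellmanOp_eq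
    (hQ : ∀ h < H, ∀ x a, bellmanOp P r π h (Q (h + 1)) x a = Q h x a)
    (hQH : ∀ x a, Q H x a = 0) {h : ℕ} (hh : h < H) (x : X) (a : A) :
    Qh H P r π h x a = Q h x a := by
  rw [Qh, Vsteps_eq_of_bellmanOp_eq hQ hQH (H - (h + 1)) (h + 1) (by omega)]
  exact hQ h hh x a

end BellmanFixedPoint

theorem induced_mdp_fixed_point_general {X A : Type*} [Fintype A]
    (H : ℕ) (P : ℕ → X → A → PMF X) (r : ℕ → X → A → ℝ)
    (π : ℕ → X → A → ℝ)
    (Q : ℕ → X → A → ℝ) (hQH : ∀ x a, Q H x a = 0) :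
    ∀ h < H, ∀ x a,
      Qh H P (fun h' x' a' => r h' x' a' - (bellmanOp P r π h' (Q (h' + 1)) x' a' - Q h' x' a'))
        π h x a = Q h x a :=
  fun _ hh => Qh_eq_of_bellmanOp_eq
    (r := inducedReward P r π Q)
    (fun h _ => bellmanOp_inducedReward P r π Q h) hQH hh

/-- Fixed point of induced MDPs: the MDP `M(Q, π)` is identical to `M` except
its step-`h` mean reward is `r_h - ([T_h^π Q_{h+1}] - Q_h)`; then the
action-value functions of `π` in `M(Q, π)` equal `Q`. -/
theorem induced_mdp_fixed_point {X A : Type*} [Fintype A]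
    (H : ℕ) (P : ℕ → X → A → PMF X) (r : ℕ → X → A → ℝ)
    (π : ℕ → X → A → ℝ) (hπ : IsPolicySeq π)
    (Q : ℕ → X → A → ℝ) (hQH : ∀ x a, Q H x a = 0) :
    ∀ h < H, ∀ x a,
      Qh H P (fun h' x' a' => r h' x' a' - (bellmanOp P r π h' (Q (h' + 1)) x' a' - Q h' x' a'))
        π h x a = Q h x a :=
  induced_mdp_fixed_point_general H P r π Q hQH
end
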